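/- Let A, B, C be real numbers with 0 < A < B < C and let x ≥ 0. With Tr_x = A + C + x, Δ_x = Tr_x² − 4·A·C·(1 + x/B), B_x = B + x, and C_x = (Tr_x + √Δ_x)/2 (√ the real square root), one has B_x < C_x. -/

import Mathlib

/-! The value of the characteristic polynomial `t² - Tr_x t + Det_x` at `t = B + x` is
`-(B - A)(C - B)(1 + x / B) < 0`, so `B + x` lies strictly between its two roots. -/

theorem lt_larger_root_of_quadratic_neg {T D b : ℝ} (h : b ^ 2 - T * b + D < 0) :
    b < (T + √(T ^ 2 - 4 * D)) / 2 := by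
  have hsq : (2 * b - T) ^ 2 < T ^ 2 - 4 * D := by nlinarith
  linarith [Real.lt_sqrt_of_sq_lt hsq]

theorem galois_charpoly_eval_B_add {A B C x : ℝ} (hB : B ≠ 0) :
    (B + x) ^ 2 - (A + C + x) * (B + x) + A * C * (1 + x / B)
      = -((B - A) * (C - B) * (1 + x / B)) := by
  field_simp
  ring

/-- For 0 < A < B < C, x ≥ 0, Tr_x = A+C+x, Δ_x = Tr_x² − 4AC(1+x/B),
B_x = B + x and C_x = (Tr_x + √Δ_x)/2, one has B_x < C_x. -/
theorem galois_top_Bx_lt_Cx (A B C x : ℝ)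
    (hA : 0 < A) (hAB : A < B) (hBC : B < C) (hx : 0 ≤ x) :
    B + x
      < ((A + C + x) + Real.sqrt ((A + C + x) ^ 2 - 4 * A * C * (1 + x / B))) / 2 := by
  have hB : 0 < B := hA.trans hAB
  have hneg : (B + x) ^ 2 - (A + C + x) * (B + x) + A * C * (1 + x / B) < 0 := by
    rw [galois_charpoly_eval_B_add hB.ne', neg_lt_zero]
    exact mul_pos (mul_pos (sub_pos.mpr hAB) (sub_pos.mpr hBC)) (by positivity)
  simpa only [mul_assoc] using lt_larger_root_of_quadratic_neg hneg
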